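/- arXiv:math/0008171 — 9 statements merged into one kernel-verified Lean document; each statement's English description precedes it below -/
import Mathlib

section
/- Let A be an n × n matrix with integer entries (n ≥ 1) and let λ ∈ ℝ be an eigenvalue of A over ℝ, i.e., there exists a nonzero row vector v : Fin n → ℝ with v ᵥ* A = λ • v (after casting A entrywise to ℝ). Then there exists a nonzero row vector r : Fin n → ℝ with r ᵥ* A = λ • r such that every entry r i lies in ℤ[λ] = Algebra.adjoin ℤ ({λ} : Set ℝ), i.e., each entry is an integer-coefficient polynomial expression in λ. (Lemma 4: the left Perron eigenvector of the substitution matrix can be chosen with entries that are integer polynomials in λ.) -/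
/-!
Since `v ᵥ* (A - λ • 1) = 0` with `v ≠ 0`, the determinant of `A - λ • 1` vanishes. All entries of
this matrix lie in the domain `ℤ[λ]`, and a matrix with zero determinant over a domain has a
nonzero left kernel vector over that same domain; it is the required eigenvector.
-/

namespace Matrix

variable {R ι : Type*} [CommRing R] [DecidableEq ι]

theorem map_intCast_sub_smul_one_apply_mem_adjoin (A : Matrix ι ι ℤ) (x : R) (i j : ι) :
    (A.map (Int.cast : ℤ → R) - x • 1) i j ∈ Algebra.adjoin ℤ ({x} : Set R) := by
  rw [sub_apply, map_apply, smul_apply, one_apply]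
  refine sub_mem (intCast_mem _ _) ?_
  split_ifs <;> simp [Algebra.self_mem_adjoin_singleton]

variable [Fintype ι]

theorem exists_vecMul_eq_zero_of_forall_mem_subring [IsDomain R] (S : Subring R)
    {M : Matrix ι ι R} (hM : ∀ i j, M i j ∈ S) (hdet : M.det = 0) :
    ∃ w ≠ 0, w ᵥ* M = 0 ∧ ∀ i, w i ∈ S := by
  set N : Matrix ι ι S := .of fun i j => ⟨M i j, hM i j⟩
  have hNM : N.map S.subtype = M := rfl
  have hdetN : N.det = 0 := S.subtype_injective <| by
    rw [RingHom.map_det, RingHom.mapMatrix_apply, hNM, hdet, map_zero]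
  obtain ⟨w, hw, hwN⟩ := exists_vecMul_eq_zero_iff.mpr hdetN
  refine ⟨S.subtype ∘ w, fun h => hw <| funext fun i => S.subtype_injective (congrFun h i), ?_,
    fun i => (w i).2⟩
  ext j
  rw [← hNM, ← RingHom.map_vecMul, hwN, Pi.zero_apply, map_zero, Pi.zero_apply]

theorem vecMul_sub_smul_one_eq_zero_iff (M : Matrix ι ι R) (c : R) (v : ι → R) :
    v ᵥ* (M - c • 1) = 0 ↔ v ᵥ* M = c • v := by
  rw [vecMul_sub, vecMul_smul, vecMul_one, sub_eq_zero]

end Matrix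

open Matrix

theorem stmt0_general (n : ℕ) (A : Matrix (Fin n) (Fin n) ℤ) (lam : ℝ)
    (v : Fin n → ℝ) (hv : v ≠ 0)
    (hev : Matrix.vecMul v (A.map (Int.cast : ℤ → ℝ)) = lam • v) :
    ∃ r : Fin n → ℝ, r ≠ 0 ∧
      Matrix.vecMul r (A.map (Int.cast : ℤ → ℝ)) = lam • r ∧
      ∀ i, r i ∈ Algebra.adjoin ℤ ({lam} : Set ℝ) := by
  have hdet : (A.map (Int.cast : ℤ → ℝ) - lam • 1).det = 0 :=
    exists_vecMul_eq_zero_iff.mp ⟨v, hv, (vecMul_sub_smul_one_eq_zero_iff _ _ _).mpr hev⟩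
  obtain ⟨r, hr, hrM, hrS⟩ := exists_vecMul_eq_zero_of_forall_mem_subring
    (Algebra.adjoin ℤ ({lam} : Set ℝ)).toSubring
    (map_intCast_sub_smul_one_apply_mem_adjoin A lam) hdet
  exact ⟨r, hr, (vecMul_sub_smul_one_eq_zero_iff _ _ _).mp hrM, hrS⟩

theorem stmt0 (n : ℕ) (hn : 1 ≤ n) (A : Matrix (Fin n) (Fin n) ℤ) (lam : ℝ)
    (v : Fin n → ℝ) (hv : v ≠ 0)
    (hev : Matrix.vecMul v (A.map (Int.cast : ℤ → ℝ)) = lam • v) :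
    ∃ r : Fin n → ℝ, r ≠ 0 ∧
      Matrix.vecMul r (A.map (Int.cast : ℤ → ℝ)) = lam • r ∧
      ∀ i, r i ∈ Algebra.adjoin ℤ ({lam} : Set ℝ) :=
  stmt0_general n A lam v hv hev
end

section
/- Let A be an n × n matrix with integer entries and let λ ∈ ℝ be a nonzero eigenvalue of A over ℝ, i.e., there exists a nonzero row vector v : Fin n → ℝ with v ᵥ* A = λ • v (after casting A entrywise to ℝ). Then there exists a nonzero row vector r : Fin n → ℝ with r ᵥ* A = λ • r such that every entry r i lies in ℤ[1/λ] = Algebra.adjoin ℤ ({λ⁻¹} : Set ℝ). (The paper's 'Noninteger Case' normalization following Lemma 4: rescaling the ℤ[λ]-eigenvector by λ^{-p} puts its entries in ℤ[1/λ].) -/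
/-!
An eigenvalue `λ` of an integer matrix is a root of its monic characteristic polynomial, hence
integral over `ℤ`; reversing that polynomial expresses `λ` as a polynomial in `λ⁻¹`, so
`λ ∈ ℤ[1/λ]`. Then `A - λ` is a matrix over the domain `ℤ[1/λ]` whose determinant vanishes,
and its left kernel over `ℤ[1/λ]` supplies the eigenvector.
-/

open Polynomial

theorem IsIntegral.mem_adjoin_inv {R K : Type*} [CommRing R] [Field K] [Algebra R K] {x : K}
    (hx : IsIntegral R x) : x ∈ Algebra.adjoin R {x⁻¹} := by
  obtain rfl | hx0 := eq_or_ne x 0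
  · exact Subalgebra.zero_mem _
  obtain ⟨p, hp, hpx⟩ := hx
  let := invertibleOfNonzero hx0
  have hrev : aeval x⁻¹ p.reverse = 0 := by
    rw [aeval_def, ← invOf_eq_inv, eval₂_reverse_eq_zero_iff]
    exact hpx
  -- `p.reverse = X * q + 1` because `p` is monic, so `x⁻¹ * q(x⁻¹) = -1`.
  have hsplit := congrArg (aeval x⁻¹) (X_mul_divX_add p.reverse)
  rw [map_add, map_mul, aeval_X, aeval_C, coeff_zero_reverse, hp.leadingCoeff, map_one, hrev]
    at hsplit
  have hx_eq : -aeval x⁻¹ p.reverse.divX = x := by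
    linear_combination -x * hsplit + aeval x⁻¹ p.reverse.divX * mul_inv_cancel₀ hx0
  have hmem := neg_mem (aeval_mem_adjoin_singleton R x⁻¹ (p := p.reverse.divX))
  rwa [hx_eq] at hmem

namespace Matrix

variable {n R K : Type*} [Fintype n] [DecidableEq n]

theorem exists_vecMul_eq_smul_iff_isRoot_charpoly [CommRing R] [IsDomain R]
    (M : Matrix n n R) (μ : R) : (∃ v ≠ 0, v ᵥ* M = μ • v) ↔ M.charpoly.IsRoot μ := by
  have hsub (v : n → R) : v ᵥ* (scalar n μ - M) = μ • v - v ᵥ* M := by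
    ext i
    simp [vecMul_sub]
  rw [IsRoot.def, eval_charpoly, ← exists_vecMul_eq_zero_iff]
  refine exists_congr fun v => and_congr_right fun _ => ?_
  rw [hsub, sub_eq_zero, eq_comm]

theorem isIntegral_of_vecMul_eq_smul [CommRing R] [CommRing K] [IsDomain K] [Algebra R K]
    {A : Matrix n n R} {μ : K} {v : n → K} (hv : v ≠ 0)
    (hev : v ᵥ* A.map (algebraMap R K) = μ • v) : IsIntegral R μ := by
  have hroot := (exists_vecMul_eq_smul_iff_isRoot_charpoly _ μ).mp ⟨v, hv, hev⟩
  rw [charpoly_map, IsRoot.def, eval_map] at hroot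
  exact ⟨A.charpoly, A.charpoly_monic, hroot⟩

theorem exists_vecMul_eq_smul_of_map [CommRing R] [IsDomain R] [CommRing K] [IsDomain K]
    {f : R →+* K} (hf : Function.Injective f) {M : Matrix n n R} {μ : R} {v : n → K}
    (hv : v ≠ 0) (hev : v ᵥ* M.map f = f μ • v) : ∃ w ≠ 0, w ᵥ* M = μ • w := by
  have hroot := (exists_vecMul_eq_smul_iff_isRoot_charpoly _ _).mp ⟨v, hv, hev⟩
  rw [charpoly_map, isRoot_map_iff hf] at hroot
  exact (exists_vecMul_eq_smul_iff_isRoot_charpoly M μ).mpr hroot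

end Matrix

theorem stmt1_general (n : ℕ) (A : Matrix (Fin n) (Fin n) ℤ) (lam : ℝ)
    (v : Fin n → ℝ) (hv : v ≠ 0)
    (hev : Matrix.vecMul v (A.map (Int.cast : ℤ → ℝ)) = lam • v) :
    ∃ r : Fin n → ℝ, r ≠ 0 ∧
      Matrix.vecMul r (A.map (Int.cast : ℤ → ℝ)) = lam • r ∧
      ∀ i, r i ∈ Algebra.adjoin ℤ ({lam⁻¹} : Set ℝ) := by
  have hlam : lam ∈ Algebra.adjoin ℤ ({lam⁻¹} : Set ℝ) :=
    (Matrix.isIntegral_of_vecMul_eq_smul hv hev).mem_adjoin_inv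
  set S := Algebra.adjoin ℤ ({lam⁻¹} : Set ℝ)
  have hA : A.map (Int.cast : ℤ → ℝ) = (A.map (algebraMap ℤ S)).map S.val := by
    ext; simp
  rw [hA] at hev ⊢
  obtain ⟨w, hw, hwA⟩ := Matrix.exists_vecMul_eq_smul_of_map (f := S.val.toRingHom)
    Subtype.val_injective (μ := ⟨lam, hlam⟩) hv hev
  refine ⟨S.val ∘ w, ?_, ?_, fun i => (w i).2⟩
  · simpa [funext_iff] using hw
  · ext i
    exact (RingHom.map_vecMul S.val.toRingHom _ w i).symm.trans (by rw [hwA]; rfl)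

theorem stmt1 (n : ℕ) (A : Matrix (Fin n) (Fin n) ℤ) (lam : ℝ) (hlam : lam ≠ 0)
    (v : Fin n → ℝ) (hv : v ≠ 0)
    (hev : Matrix.vecMul v (A.map (Int.cast : ℤ → ℝ)) = lam • v) :
    ∃ r : Fin n → ℝ, r ≠ 0 ∧
      Matrix.vecMul r (A.map (Int.cast : ℤ → ℝ)) = lam • r ∧
      ∀ i, r i ∈ Algebra.adjoin ℤ ({lam⁻¹} : Set ℝ) :=
  stmt1_general n A lam v hv hev
end

section
/- Let A be an n × n nonnegative primitive integer matrix. Let λ ∈ ℝ with λ > 0, let r : Fin n → ℝ be a nonzero row vector with nonnegative entries satisfying r ᵥ* A = λ • r, and let w : Fin n → ℝ be a column vector with strictly positive entries satisfying A *ᵥ w = λ • w (A cast entrywise to ℝ). Assume λ is a simple root of the characteristic polynomial of A, and that every complex root z of the characteristic polynomial of A with z ≠ λ satisfies ‖z‖ < λ. Then for every integer vector v : Fin n → ℤ the following are equivalent: (i) 0 < r ⬝ᵥ v (dot product with v cast entrywise to ℝ); (ii) there exists m : ℕ such that every entry of (A^m) *ᵥ v is strictly positive. (Lemma 1: the nonzero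 part of the positive cone C₊ of the direct limit of (ℤ^n, φ*) is exactly the preimage of the positive reals under the homomorphism μ[(v,k)] = λ^{-k} r·v.) -/
/-!
Let `B` be `A` over `ℝ`. Perron's argument for the positive matrix `B ^ k` shows that every
`lam`-eigenvector of `B`, real or complex, is a multiple of `w`, so none is orthogonal to `r`.
Hence the deflation `N = B - (lam / r ⬝ᵥ w) • w rᵀ`, which kills `r` from the left and agrees
with `B` on `rᗮ`, has spectral radius `< lam`, and Gelfand's formula gives
`lam⁻ᵐ • B ^ m *ᵥ x = lam⁻ᵐ • N ^ m *ᵥ x → 0` whenever `r ⬝ᵥ x = 0`. Therefore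
`lam⁻ᵐ • B ^ m *ᵥ v → (r ⬝ᵥ v / r ⬝ᵥ w) • w`, which has positive entries when `r ⬝ᵥ v > 0`.
Conversely `r ⬝ᵥ B ^ m *ᵥ v = lam ^ m * r ⬝ᵥ v` is positive as soon as `B ^ m *ᵥ v` is.
-/

open Matrix Filter Topology

theorem tendsto_norm_pow_div_pow_of_forall_mem_spectrum {A : Type*} [NormedRing A]
    [NormedAlgebra ℂ A] [CompleteSpace A] [Nontrivial A] {a : A} {lam : ℝ}
    (h : ∀ z ∈ spectrum ℂ a, ‖z‖ < lam) :
    Tendsto (fun m : ℕ => ‖a ^ m‖ / lam ^ m) atTop (𝓝 0) := by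
  obtain ⟨z, hz⟩ := spectrum.nonempty a
  have hlam : 0 < lam := (norm_nonneg z).trans_lt (h z hz)
  have hrad : spectralRadius ℂ a < ENNReal.ofReal lam := by
    refine spectrum.spectralRadius_lt_of_forall_lt a fun z hz => ?_
    rw [← NNReal.coe_lt_coe, coe_nnnorm, Real.coe_toNNReal _ hlam.le]
    exact h z hz
  obtain ⟨ν, hν, hρν, hνlam⟩ := ENNReal.lt_iff_exists_real_btwn.1 hrad
  rw [ENNReal.ofReal_lt_ofReal_iff hlam] at hνlam
  have hgelfand := spectrum.pow_norm_pow_one_div_tendsto_nhds_spectralRadius a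
  have hbound : ∀ᶠ m : ℕ in atTop, ‖a ^ m‖ ≤ ν ^ m := by
    filter_upwards [hgelfand.eventually_lt_const hρν, eventually_ne_atTop 0] with m hm hm0
    calc ‖a ^ m‖ = (‖a ^ m‖ ^ (1 / m : ℝ)) ^ m := by
          rw [one_div, Real.rpow_inv_natCast_pow (norm_nonneg _) hm0]
      _ ≤ ν ^ m := pow_le_pow_left₀ (by positivity) ((ENNReal.ofReal_lt_ofReal_iff'.1 hm).1.le) m
  refine squeeze_zero' (.of_forall fun m => by positivity) ?_
    (tendsto_pow_atTop_nhds_zero_of_lt_one (div_nonneg hν hlam.le) ((div_lt_one hlam).2 hνlam))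
  filter_upwards [hbound] with m hm
  rw [div_pow]
  gcongr

namespace Matrix

variable {ι 𝕜 K : Type*} [Fintype ι]

section Eigenvector

variable [DecidableEq ι]

theorem pow_mulVec_of_mulVec_eq_smul [CommSemiring K] {M : Matrix ι ι K} {c : K} {v : ι → K}
    (h : M *ᵥ v = c • v) (m : ℕ) : M ^ m *ᵥ v = c ^ m • v := by
  induction m with
  | zero => simp
  | succ m ih => rw [pow_succ', ← mulVec_mulVec, ih, mulVec_smul, h, smul_smul, pow_succ]

theorem vecMul_pow_of_vecMul_eq_smul [CommSemiring K] {M : Matrix ι ι K} {c : K} {v : ι → K}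
    (h : v ᵥ* M = c • v) (m : ℕ) : v ᵥ* M ^ m = c ^ m • v := by
  induction m with
  | zero => simp
  | succ m ih => rw [pow_succ, ← vecMul_vecMul, ih, smul_vecMul, h, smul_smul, pow_succ]

theorem mem_spectrum_iff_exists_mulVec_eq_smul [Field K] {M : Matrix ι ι K} {z : K} :
    z ∈ spectrum K M ↔ ∃ u ≠ 0, M *ᵥ u = z • u := by
  rw [← spectrum_toLin', ← Module.End.hasEigenvalue_iff_mem_spectrum]
  constructor
  · intro h
    obtain ⟨u, hu⟩ := h.exists_hasEigenvector
    exact ⟨u, hu.2, by simpa using hu.apply_eq_smul⟩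
  · rintro ⟨u, hu, h⟩
    exact Module.End.hasEigenvalue_of_hasEigenvector
      ⟨by simpa [Module.End.mem_eigenspace_iff] using h, hu⟩

end Eigenvector

section Deflation

variable [Field K] {M : Matrix ι ι K} {lam : K} {r w u : ι → K}

def deflation (M : Matrix ι ι K) (lam : K) (r w : ι → K) : Matrix ι ι K :=
  M - (lam / (r ⬝ᵥ w)) • vecMulVec w r

theorem vecMul_deflation (hr : r ᵥ* M = lam • r) (hrw : r ⬝ᵥ w ≠ 0) :
    r ᵥ* deflation M lam r w = 0 := by
  rw [deflation, vecMul_sub, vecMul_smul, vecMul_vecMulVec, hr, smul_smul,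
    div_mul_cancel₀ _ hrw, sub_self]

theorem deflation_mulVec_of_dotProduct_eq_zero (hu : r ⬝ᵥ u = 0) :
    deflation M lam r w *ᵥ u = M *ᵥ u := by
  rw [deflation, sub_mulVec, smul_mulVec, vecMulVec_mulVec, hu, MulOpposite.op_zero, zero_smul,
    smul_zero, sub_zero]

theorem pow_deflation_mulVec_of_dotProduct_eq_zero [DecidableEq ι] (hr : r ᵥ* M = lam • r)
    (hu : r ⬝ᵥ u = 0) (m : ℕ) : deflation M lam r w ^ m *ᵥ u = M ^ m *ᵥ u := by
  induction m with
  | zero => simp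
  | succ m ih =>
    have hMm : r ⬝ᵥ (M ^ m *ᵥ u) = 0 := by
      rw [dotProduct_mulVec, vecMul_pow_of_vecMul_eq_smul hr, smul_dotProduct, hu, smul_zero]
    rw [pow_succ', ← mulVec_mulVec, ih, deflation_mulVec_of_dotProduct_eq_zero hMm, mulVec_mulVec,
      ← pow_succ']

theorem exists_mulVec_eq_smul_of_mem_spectrum_deflation [DecidableEq ι] (hr : r ᵥ* M = lam • r)
    (hrw : r ⬝ᵥ w ≠ 0) {z : K} (hz : z ∈ spectrum K (deflation M lam r w)) (hz0 : z ≠ 0) :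
    ∃ u ≠ 0, M *ᵥ u = z • u ∧ r ⬝ᵥ u = 0 := by
  obtain ⟨u, hu, huz⟩ := mem_spectrum_iff_exists_mulVec_eq_smul.1 hz
  have hru : r ⬝ᵥ u = 0 := by
    have := congrArg (r ⬝ᵥ ·) huz
    simp only [dotProduct_mulVec, vecMul_deflation hr hrw, zero_dotProduct, dotProduct_smul,
      smul_eq_mul] at this
    exact (mul_eq_zero.1 this.symm).resolve_left hz0
  exact ⟨u, hu, by rw [← deflation_mulVec_of_dotProduct_eq_zero hru, huz], hru⟩

end Deflation

section Positive

variable [Field 𝕜] [LinearOrder 𝕜] [IsStrictOrderedRing 𝕜]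

theorem dotProduct_pos_of_nonneg_of_ne_zero {r v : ι → 𝕜} (hr : ∀ i, 0 ≤ r i) (hr0 : r ≠ 0)
    (hv : ∀ i, 0 < v i) : 0 < r ⬝ᵥ v := by
  obtain ⟨i, hi⟩ := Function.ne_iff.1 hr0
  exact Finset.sum_pos' (fun j _ => mul_nonneg (hr j) (hv j).le)
    ⟨i, Finset.mem_univ i, mul_pos ((hr i).lt_of_ne' hi) (hv i)⟩

theorem exists_eq_smul_of_mulVec_eq_smul_of_pos {B : Matrix ι ι 𝕜} (hB : ∀ i j, 0 < B i j)
    {μ : 𝕜} {w y : ι → 𝕜} (hw : ∀ i, 0 < w i) (hBw : B *ᵥ w = μ • w) (hBy : B *ᵥ y = μ • y) :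
    ∃ t : 𝕜, y = t • w := by
  cases isEmpty_or_nonempty ι
  · exact ⟨0, Subsingleton.elim _ _⟩
  -- Subtract the largest multiple of `w` lying below `y`; a nonzero remainder would be a
  -- nonnegative eigenvector with a zero entry, which positivity of `B` rules out.
  obtain ⟨i₀, hi₀⟩ := Finite.exists_min fun i => y i / w i
  set t := y i₀ / w i₀
  set q := y - t • w
  have hq : ∀ i, 0 ≤ q i := fun i => by
    simpa [q] using (le_div_iff₀ (hw i)).1 (hi₀ i)
  have hqi₀ : q i₀ = 0 := by simp [q, t, div_mul_cancel₀ _ (hw i₀).ne']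
  have hBq : B *ᵥ q = μ • q := by
    rw [mulVec_sub, mulVec_smul, hBw, hBy, smul_sub, smul_comm]
  refine ⟨t, sub_eq_zero.1 (by_contra fun hq0 => ?_)⟩
  have hpos := dotProduct_pos_of_nonneg_of_ne_zero hq hq0 (hB i₀)
  rw [dotProduct_comm] at hpos
  have h := congrFun hBq i₀
  simp only [mulVec, Pi.smul_apply, hqi₀, smul_zero] at h
  exact hpos.ne' h

theorem eq_zero_of_mulVec_eq_smul_of_dotProduct_eq_zero [DecidableEq ι] {B : Matrix ι ι 𝕜}
    {lam : 𝕜} {r w y : ι → 𝕜} (hprim : ∃ k, ∀ i j, 0 < (B ^ k) i j) (hw : ∀ i, 0 < w i)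
    (hBw : B *ᵥ w = lam • w) (hrw : r ⬝ᵥ w ≠ 0) (hy : B *ᵥ y = lam • y) (hry : r ⬝ᵥ y = 0) :
    y = 0 := by
  obtain ⟨k, hk⟩ := hprim
  obtain ⟨t, rfl⟩ := exists_eq_smul_of_mulVec_eq_smul_of_pos hk hw
    (pow_mulVec_of_mulVec_eq_smul hBw k) (pow_mulVec_of_mulVec_eq_smul hy k)
  rw [dotProduct_smul, smul_eq_mul, mul_eq_zero] at hry
  rw [hry.resolve_right hrw, zero_smul]

end Positive

section Complexification

open Complex

theorem ofReal_comp_vecMul_eq_smul {B : Matrix ι ι ℝ} {lam : ℝ} {r : ι → ℝ}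
    (hr : r ᵥ* B = lam • r) : (ofReal ∘ r) ᵥ* B.map ofReal = (lam : ℂ) • (ofReal ∘ r) :=
  funext fun i => (RingHom.map_vecMul ofRealHom B r i).symm.trans (by simp [hr])

theorem map_ofReal_mulVec (B : Matrix ι ι ℝ) (x : ι → ℝ) :
    B.map ofReal *ᵥ (ofReal ∘ x) = ofReal ∘ (B *ᵥ x) :=
  funext fun i => (RingHom.map_mulVec ofRealHom B x i).symm

theorem ofReal_comp_dotProduct (r x : ι → ℝ) :
    (ofReal ∘ r) ⬝ᵥ (ofReal ∘ x) = ((r ⬝ᵥ x : ℝ) : ℂ) :=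
  (RingHom.map_dotProduct ofRealHom r x).symm

theorem map_ofReal_pow [DecidableEq ι] (B : Matrix ι ι ℝ) (m : ℕ) :
    (B ^ m).map ofReal = B.map ofReal ^ m :=
  Matrix.map_pow B ofRealHom m

theorem re_map_ofReal_mulVec (B : Matrix ι ι ℝ) (u : ι → ℂ) :
    (fun i => (B.map ofReal *ᵥ u) i |>.re) = B *ᵥ fun i => (u i).re := by
  ext i
  simp [mulVec, dotProduct, re_sum]

theorem im_map_ofReal_mulVec (B : Matrix ι ι ℝ) (u : ι → ℂ) :
    (fun i => (B.map ofReal *ᵥ u) i |>.im) = B *ᵥ fun i => (u i).im := by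
  ext i
  simp [mulVec, dotProduct, im_sum]

end Complexification

section Primitive

open Complex

variable [DecidableEq ι] {B : Matrix ι ι ℝ} {lam : ℝ} {r w : ι → ℝ}

theorem eq_zero_of_map_ofReal_mulVec_eq_smul_of_dotProduct_eq_zero
    (hprim : ∃ k, ∀ i j, 0 < (B ^ k) i j) (hw : ∀ i, 0 < w i) (hBw : B *ᵥ w = lam • w)
    (hrw : r ⬝ᵥ w ≠ 0) {u : ι → ℂ} (hu : B.map ofReal *ᵥ u = (lam : ℂ) • u)
    (hru : (ofReal ∘ r) ⬝ᵥ u = 0) : u = 0 := by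
  have hre : (fun i => (u i).re) = 0 := by
    refine eq_zero_of_mulVec_eq_smul_of_dotProduct_eq_zero hprim hw hBw hrw ?_ ?_
    · rw [← re_map_ofReal_mulVec, hu]; ext; simp
    · simpa [dotProduct, re_sum] using congrArg re hru
  have him : (fun i => (u i).im) = 0 := by
    refine eq_zero_of_mulVec_eq_smul_of_dotProduct_eq_zero hprim hw hBw hrw ?_ ?_
    · rw [← im_map_ofReal_mulVec, hu]; ext; simp
    · simpa [dotProduct, im_sum] using congrArg im hru
  funext i
  exact Complex.ext (congrFun hre i) (congrFun him i)

theorem norm_lt_of_mem_spectrum_deflation (hlam : 0 < lam) (hprim : ∃ k, ∀ i j, 0 < (B ^ k) i j)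
    (hr : r ᵥ* B = lam • r) (hw : ∀ i, 0 < w i) (hBw : B *ᵥ w = lam • w) (hrw : r ⬝ᵥ w ≠ 0)
    (hdom : ∀ z : ℂ, (B.map ofReal).charpoly.IsRoot z → z ≠ lam → ‖z‖ < lam) {z : ℂ}
    (hz : z ∈ spectrum ℂ (deflation (B.map ofReal) lam (ofReal ∘ r) (ofReal ∘ w))) :
    ‖z‖ < lam := by
  rcases eq_or_ne z 0 with rfl | hz0
  · simpa using hlam
  have hrwc : (ofReal ∘ r) ⬝ᵥ (ofReal ∘ w) ≠ 0 := by
    rw [ofReal_comp_dotProduct]; exact_mod_cast hrw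
  obtain ⟨u, hu, huz, hru⟩ := exists_mulVec_eq_smul_of_mem_spectrum_deflation
    (ofReal_comp_vecMul_eq_smul hr) hrwc hz hz0
  rcases eq_or_ne z lam with rfl | hzlam
  · exact (hu (eq_zero_of_map_ofReal_mulVec_eq_smul_of_dotProduct_eq_zero hprim hw hBw hrw huz
      hru)).elim
  exact hdom z (mem_spectrum_iff_isRoot_charpoly.1 (mem_spectrum_iff_exists_mulVec_eq_smul.2
    ⟨u, hu, huz⟩)) hzlam

attribute [local instance] Matrix.linftyOpNormedAddCommGroup Matrix.linftyOpNormedRing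
  Matrix.linftyOpNormedAlgebra in
theorem tendsto_inv_pow_smul_pow_mulVec_of_dotProduct_eq_zero (hlam : 0 < lam)
    (hprim : ∃ k, ∀ i j, 0 < (B ^ k) i j) (hr : r ᵥ* B = lam • r) (hw : ∀ i, 0 < w i)
    (hBw : B *ᵥ w = lam • w) (hrw : r ⬝ᵥ w ≠ 0)
    (hdom : ∀ z : ℂ, (B.map ofReal).charpoly.IsRoot z → z ≠ lam → ‖z‖ < lam) {x : ι → ℝ}
    (hx : r ⬝ᵥ x = 0) : Tendsto (fun m : ℕ => (lam ^ m)⁻¹ • (B ^ m *ᵥ x)) atTop (𝓝 0) := by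
  cases isEmpty_or_nonempty ι
  · simp [Subsingleton.elim _ (0 : ι → ℝ)]
  set N := deflation (B.map ofReal) lam (ofReal ∘ r) (ofReal ∘ w)
  have hN := tendsto_norm_pow_div_pow_of_forall_mem_spectrum fun z (hz : z ∈ spectrum ℂ N) =>
    norm_lt_of_mem_spectrum_deflation hlam hprim hr hw hBw hrw hdom hz
  have hxc : (ofReal ∘ r) ⬝ᵥ (ofReal ∘ x) = 0 := by
    rw [ofReal_comp_dotProduct, hx, ofReal_zero]
  have hbound : ∀ m, ‖B ^ m *ᵥ x‖ ≤ ‖N ^ m‖ * ‖ofReal ∘ x‖ := fun m => by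
    refine (pi_norm_le_iff_of_nonneg (by positivity)).2 fun i => ?_
    have : ((B ^ m *ᵥ x) i : ℂ) = (N ^ m *ᵥ (ofReal ∘ x)) i := by
      rw [pow_deflation_mulVec_of_dotProduct_eq_zero (ofReal_comp_vecMul_eq_smul hr) hxc,
        ← map_ofReal_pow, map_ofReal_mulVec]
      rfl
    rw [← norm_real, this]
    exact (norm_le_pi_norm _ i).trans (linfty_opNorm_mulVec _ _)
  rw [tendsto_zero_iff_norm_tendsto_zero]
  refine squeeze_zero (fun _ => norm_nonneg _) (fun m => ?_)
    (by simpa using hN.mul_const ‖ofReal ∘ x‖)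
  rw [norm_smul, norm_inv, norm_pow, Real.norm_of_nonneg hlam.le, div_mul_eq_mul_div,
    inv_mul_eq_div]
  gcongr
  exact hbound m

theorem tendsto_inv_pow_smul_pow_mulVec (hlam : 0 < lam)
    (hprim : ∃ k, ∀ i j, 0 < (B ^ k) i j) (hr : r ᵥ* B = lam • r) (hw : ∀ i, 0 < w i)
    (hBw : B *ᵥ w = lam • w) (hrw : r ⬝ᵥ w ≠ 0)
    (hdom : ∀ z : ℂ, (B.map ofReal).charpoly.IsRoot z → z ≠ lam → ‖z‖ < lam) (v : ι → ℝ) :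
    Tendsto (fun m : ℕ => (lam ^ m)⁻¹ • (B ^ m *ᵥ v)) atTop (𝓝 ((r ⬝ᵥ v / r ⬝ᵥ w) • w)) := by
  set c := r ⬝ᵥ v / r ⬝ᵥ w
  have hx : r ⬝ᵥ (v - c • w) = 0 := by
    rw [dotProduct_sub, dotProduct_smul, smul_eq_mul, div_mul_cancel₀ _ hrw, sub_self]
  have h := (tendsto_inv_pow_smul_pow_mulVec_of_dotProduct_eq_zero hlam hprim hr hw hBw hrw hdom
    hx).add_const (c • w)
  rw [zero_add] at h
  refine h.congr fun m => ?_
  rw [mulVec_sub, mulVec_smul, pow_mulVec_of_mulVec_eq_smul hBw, smul_sub, smul_comm c,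
    smul_smul, inv_mul_cancel₀ (pow_ne_zero m hlam.ne'), one_smul, sub_add_cancel]

theorem dotProduct_pos_iff_exists_forall_pow_mulVec_pos (hlam : 0 < lam)
    (hprim : ∃ k, ∀ i j, 0 < (B ^ k) i j) (hr0 : r ≠ 0) (hrnn : ∀ i, 0 ≤ r i)
    (hr : r ᵥ* B = lam • r) (hw : ∀ i, 0 < w i) (hBw : B *ᵥ w = lam • w)
    (hdom : ∀ z : ℂ, (B.map ofReal).charpoly.IsRoot z → z ≠ lam → ‖z‖ < lam) (v : ι → ℝ) :
    0 < r ⬝ᵥ v ↔ ∃ m : ℕ, ∀ i, 0 < (B ^ m *ᵥ v) i := by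
  have hrw : 0 < r ⬝ᵥ w := dotProduct_pos_of_nonneg_of_ne_zero hrnn hr0 hw
  constructor
  · intro hrv
    have hlim := tendsto_inv_pow_smul_pow_mulVec hlam hprim hr hw hBw hrw.ne' hdom v
    have hpos : ∀ i, 0 < ((r ⬝ᵥ v / r ⬝ᵥ w) • w) i := fun i => mul_pos (div_pos hrv hrw) (hw i)
    obtain ⟨m, hm⟩ := (eventually_all.2 fun i =>
      (tendsto_pi_nhds.1 hlim i).eventually (lt_mem_nhds (hpos i))).exists
    exact ⟨m, fun i => pos_of_mul_pos_right (hm i) (inv_pos.2 (pow_pos hlam m)).le⟩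
  · rintro ⟨m, hm⟩
    have h := dotProduct_pos_of_nonneg_of_ne_zero hrnn hr0 hm
    rw [dotProduct_mulVec, vecMul_pow_of_vecMul_eq_smul hr, smul_dotProduct, smul_eq_mul] at h
    exact pos_of_mul_pos_right h (pow_pos hlam m).le

end Primitive

end Matrix

theorem stmt3_general (n : ℕ) (A : Matrix (Fin n) (Fin n) ℤ)
    (hprim : ∃ k, ∀ i j, 0 < (A ^ k) i j)
    (lam : ℝ) (hlam : 0 < lam)
    (r : Fin n → ℝ) (hr0 : r ≠ 0) (hrnn : ∀ i, 0 ≤ r i)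
    (hr : Matrix.vecMul r (A.map (Int.cast : ℤ → ℝ)) = lam • r)
    (w : Fin n → ℝ) (hw : ∀ i, 0 < w i)
    (hww : (A.map (Int.cast : ℤ → ℝ)).mulVec w = lam • w)
    (hdom : ∀ z : ℂ, ((A.map (Int.cast : ℤ → ℂ)).charpoly).IsRoot z →
      z ≠ (lam : ℂ) → ‖z‖ < lam)
    (v : Fin n → ℤ) :
    0 < dotProduct r (fun i => (v i : ℝ)) ↔
      ∃ m : ℕ, ∀ i, 0 < ((A ^ m).mulVec v) i := by
  set B := A.map (Int.cast : ℤ → ℝ)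
  have hpow : ∀ m, B ^ m = (A ^ m).map (Int.cast : ℤ → ℝ) := fun m =>
    (Matrix.map_pow A (Int.castRingHom ℝ) m).symm
  have hBprim : ∃ k, ∀ i j, 0 < (B ^ k) i j := hprim.imp fun k hk i j => by
    rw [hpow, map_apply]
    exact_mod_cast hk i j
  have hBdom : ∀ z : ℂ, (B.map Complex.ofReal).charpoly.IsRoot z → z ≠ lam → ‖z‖ < lam := by
    simpa [B, Matrix.map_map, Function.comp_def] using hdom
  have hcast : ∀ m i, (B ^ m *ᵥ fun i => (v i : ℝ)) i = ((A ^ m *ᵥ v) i : ℝ) := fun m i => by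
    rw [hpow]
    exact (RingHom.map_mulVec (Int.castRingHom ℝ) _ v i).symm
  rw [dotProduct_pos_iff_exists_forall_pow_mulVec_pos hlam hBprim hr0 hrnn hr hw hww hBdom]
  simp only [hcast, Int.cast_pos]

theorem stmt3 (n : ℕ) (A : Matrix (Fin n) (Fin n) ℤ)
    (hA : ∀ i j, 0 ≤ A i j) (hprim : ∃ k, ∀ i j, 0 < (A ^ k) i j)
    (lam : ℝ) (hlam : 0 < lam)
    (r : Fin n → ℝ) (hr0 : r ≠ 0) (hrnn : ∀ i, 0 ≤ r i)
    (hr : Matrix.vecMul r (A.map (Int.cast : ℤ → ℝ)) = lam • r)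
    (w : Fin n → ℝ) (hw : ∀ i, 0 < w i)
    (hww : (A.map (Int.cast : ℤ → ℝ)).mulVec w = lam • w)
    (hsimple : ((A.map (Int.cast : ℤ → ℝ)).charpoly).rootMultiplicity lam = 1)
    (hdom : ∀ z : ℂ, ((A.map (Int.cast : ℤ → ℂ)).charpoly).IsRoot z →
      z ≠ (lam : ℂ) → ‖z‖ < lam)
    (v : Fin n → ℤ) :
    0 < dotProduct r (fun i => (v i : ℝ)) ↔
      ∃ m : ℕ, ∀ i, 0 < ((A ^ m).mulVec v) i :=
  stmt3_general n A hprim lam hlam r hr0 hrnn hr w hw hww hdom v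
end

section
/- Let A be an n × n nonnegative primitive integer matrix, let λ ∈ ℝ with λ > 0, and let r : Fin n → ℝ be a nonzero row vector with nonnegative entries satisfying r ᵥ* A = λ • r (A cast entrywise to ℝ). Let v : Fin n → ℤ and suppose there exists m : ℕ such that (A^m) *ᵥ v has all entries ≥ 0 and is not the zero vector. Then 0 < r ⬝ᵥ v (dot product with v cast entrywise to ℝ). (The forward inclusion in Lemma 1: every nonzero element of the positive cone C₊ has strictly positive μ-value.) -/
/-!
Primitivity makes the left eigenvector positive: from `r ᵥ* A ^ k = λ ^ k • r` with `A ^ k`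
entrywise positive, every coordinate `λ ^ k * r j` is positive. Then
`λ ^ m * (r ⬝ᵥ v) = r ⬝ᵥ (A ^ m *ᵥ v)` is the pairing of a positive vector with a nonzero
nonnegative one.
-/

namespace Matrix

variable {ι R : Type*} [Fintype ι]

theorem vecMul_pow_eq_pow_smul [DecidableEq ι] [Semiring R] {B : Matrix ι ι R} {r : ι → R}
    {c : R} (h : r ᵥ* B = c • r) (k : ℕ) : r ᵥ* B ^ k = c ^ k • r := by
  induction k with
  | zero => simp
  | succ k ih => rw [pow_succ, ← vecMul_vecMul, ih, smul_vecMul, h, smul_smul, pow_succ]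

variable [CommSemiring R] [LinearOrder R] [IsStrictOrderedRing R]

theorem dotProduct_pos_of_forall_pos {r w : ι → R} (hr : ∀ i, 0 < r i) (hw : 0 < w) :
    0 < r ⬝ᵥ w := by
  obtain ⟨hw_nonneg, j, hj⟩ := Pi.lt_def.mp hw
  exact Finset.sum_pos' (fun i _ => mul_nonneg (hr i).le (hw_nonneg i))
    ⟨j, Finset.mem_univ j, mul_pos (hr j) hj⟩

theorem vecMul_apply_pos {r : ι → R} {M : Matrix ι ι R} (hr : 0 < r) (hM : ∀ i j, 0 < M i j)
    (j : ι) : 0 < (r ᵥ* M) j :=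
  (dotProduct_pos_of_forall_pos (hM · j) hr).trans_eq (dotProduct_comm _ _)

variable [DecidableEq ι]

theorem forall_pos_of_vecMul_eq_smul {B : Matrix ι ι R} {r : ι → R} {c : R} {k : ℕ}
    (hB : ∀ i j, 0 < (B ^ k) i j) (hr : 0 < r) (h : r ᵥ* B = c • r) (j : ι) : 0 < r j := by
  have hpos := vecMul_apply_pos hr hB j
  rw [vecMul_pow_eq_pow_smul h] at hpos
  refine (hr.le j).lt_of_ne' fun hj => ?_
  simp [hj] at hpos

theorem dotProduct_pos_of_mulVec_pow_pos {B : Matrix ι ι R} {r v : ι → R} {c : R} {m : ℕ}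
    (hc : 0 < c) (hr : ∀ i, 0 < r i) (h : r ᵥ* B = c • r) (hv : 0 < B ^ m *ᵥ v) :
    0 < r ⬝ᵥ v := by
  have hpos := dotProduct_pos_of_forall_pos hr hv
  rw [dotProduct_mulVec, vecMul_pow_eq_pow_smul h, smul_dotProduct, smul_eq_mul] at hpos
  exact pos_of_mul_pos_right hpos (pow_pos hc m).le

end Matrix

theorem stmt4_general (n : ℕ) (A : Matrix (Fin n) (Fin n) ℤ)
    (hprim : ∃ k, ∀ i j, 0 < (A ^ k) i j)
    (lam : ℝ) (hlam : 0 < lam)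
    (r : Fin n → ℝ) (hr0 : r ≠ 0) (hrnn : ∀ i, 0 ≤ r i)
    (hr : Matrix.vecMul r (A.map (Int.cast : ℤ → ℝ)) = lam • r)
    (v : Fin n → ℤ) (m : ℕ)
    (hnn : ∀ i, 0 ≤ ((A ^ m).mulVec v) i) (hne : (A ^ m).mulVec v ≠ 0) :
    0 < dotProduct r (fun i => (v i : ℝ)) := by
  have hcast_pow (k : ℕ) : A.map (Int.cast : ℤ → ℝ) ^ k = (A ^ k).map Int.cast :=
    (Matrix.map_pow A (Int.castRingHom ℝ) k).symm
  obtain ⟨k, hk⟩ := hprim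
  have hr_pos : ∀ i, 0 < r i := by
    refine Matrix.forall_pos_of_vecMul_eq_smul (k := k) (fun i j => ?_)
      (lt_of_le_of_ne hrnn hr0.symm) hr
    rw [hcast_pow, Matrix.map_apply]
    exact_mod_cast hk i j
  refine Matrix.dotProduct_pos_of_mulVec_pow_pos (m := m) hlam hr_pos hr ?_
  have hcast : (A.map (Int.cast : ℤ → ℝ) ^ m).mulVec (fun i => (v i : ℝ))
      = fun i => ((A ^ m).mulVec v i : ℝ) := by
    ext i
    rw [hcast_pow]
    exact (RingHom.map_mulVec (Int.castRingHom ℝ) _ _ i).symm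
  obtain ⟨j, hj⟩ := (Pi.lt_def.mp (lt_of_le_of_ne hnn hne.symm)).2
  rw [hcast]
  exact Pi.lt_def.mpr ⟨fun i => by simpa using hnn i, j, by simpa using hj⟩

theorem stmt4 (n : ℕ) (A : Matrix (Fin n) (Fin n) ℤ)
    (hA : ∀ i j, 0 ≤ A i j) (hprim : ∃ k, ∀ i j, 0 < (A ^ k) i j)
    (lam : ℝ) (hlam : 0 < lam)
    (r : Fin n → ℝ) (hr0 : r ≠ 0) (hrnn : ∀ i, 0 ≤ r i)
    (hr : Matrix.vecMul r (A.map (Int.cast : ℤ → ℝ)) = lam • r)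
    (v : Fin n → ℤ) (m : ℕ)
    (hnn : ∀ i, 0 ≤ ((A ^ m).mulVec v) i) (hne : (A ^ m).mulVec v ≠ 0) :
    0 < dotProduct r (fun i => (v i : ℝ)) :=
  stmt4_general n A hprim lam hlam r hr0 hrnn hr v m hnn hne
end

section
/- Let A be an n × n real matrix, let λ ∈ ℝ with λ > 1, and let r : Fin n → ℝ be a row vector with r ᵥ* A = λ • r. Let u : Fin n → ℝ and C ≥ 0 be such that for every l : ℕ and every index i, |((A^l) *ᵥ u) i| ≤ C * λ^(l/2) (real power with exponent l/2). Then r ⬝ᵥ u = 0. (The key estimate in the proof of Lemma 2: a cochain whose substitution iterates grow at most like the perimeter, i.e. like λ^{l/2}, is annihilated by the Perron weight μ; hence Im δ ⊆ Ker μ.) -/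
/-! If `r` is a left eigenvector of `A` for `λ`, then `r ⬝ᵥ (A ^ l *ᵥ u) = λ ^ l * (r ⬝ᵥ u)`, while
the growth bound gives `|r ⬝ᵥ (A ^ l *ᵥ u)| ≤ K λ ^ (l / 2)`. Hence `|r ⬝ᵥ u| * √λ ^ l ≤ K` for
all `l`, which forces `r ⬝ᵥ u = 0` because `√λ > 1`. -/

open Filter

namespace Matrix

variable {ι R : Type*} [Fintype ι] [DecidableEq ι] [CommSemiring R]

theorem vecMul_pow_of_vecMul_eq_smul_s5 {A : Matrix ι ι R} {r : ι → R} {c : R}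
    (hr : r ᵥ* A = c • r) (l : ℕ) : r ᵥ* (A ^ l) = c ^ l • r := by
  induction l with
  | zero => simp
  | succ k ih => rw [pow_succ, ← vecMul_vecMul, ih, smul_vecMul, hr, smul_smul, pow_succ]

theorem dotProduct_pow_mulVec_of_vecMul_eq_smul {A : Matrix ι ι R} {r : ι → R} {c : R}
    (hr : r ᵥ* A = c • r) (l : ℕ) (u : ι → R) : r ⬝ᵥ (A ^ l *ᵥ u) = c ^ l * (r ⬝ᵥ u) := by
  rw [dotProduct_mulVec, vecMul_pow_of_vecMul_eq_smul_s5 hr, smul_dotProduct, smul_eq_mul]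

end Matrix

theorem abs_dotProduct_le_of_forall_abs_le {ι R : Type*} [Fintype ι] [Ring R] [LinearOrder R]
    [IsStrictOrderedRing R] {r v : ι → R} {M : R} (hv : ∀ i, |v i| ≤ M) :
    |r ⬝ᵥ v| ≤ (∑ i, |r i|) * M :=
  calc |r ⬝ᵥ v| ≤ ∑ i, |r i * v i| := Finset.abs_sum_le_sum_abs _ _
    _ ≤ ∑ i, |r i| * M := Finset.sum_le_sum fun i _ => by
        rw [abs_mul]; exact mul_le_mul_of_nonneg_left (hv i) (abs_nonneg _)
    _ = (∑ i, |r i|) * M := Finset.sum_mul _ _ _ |>.symm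

theorem eq_zero_of_forall_abs_mul_pow_le {x K μ : ℝ} (hμ : 1 < μ)
    (h : ∀ l : ℕ, |x| * μ ^ l ≤ K) : x = 0 := by
  by_contra hx
  have hgrow : Tendsto (fun l : ℕ => |x| * μ ^ l) atTop atTop :=
    (tendsto_pow_atTop_atTop_of_one_lt hμ).const_mul_atTop (abs_pos.mpr hx)
  obtain ⟨l, hl⟩ := (hgrow.eventually_gt_atTop K).exists
  exact (h l).not_gt hl

theorem stmt5_general (n : ℕ) (A : Matrix (Fin n) (Fin n) ℝ) (lam : ℝ) (hlam : 1 < lam)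
    (r : Fin n → ℝ) (hr : Matrix.vecMul r A = lam • r)
    (u : Fin n → ℝ) (C : ℝ)
    (hbound : ∀ (l : ℕ) (i : Fin n),
      |((A ^ l).mulVec u) i| ≤ C * lam ^ ((l : ℝ) / 2)) :
    dotProduct r u = 0 := by
  have hlam_pos : 0 < lam := one_pos.trans hlam
  have hμ : 1 < √lam := Real.lt_sqrt_of_sq_lt (by linarith)
  have hrpow (l : ℕ) : lam ^ ((l : ℝ) / 2) = √lam ^ l := by
    rw [Real.sqrt_eq_rpow, ← Real.rpow_natCast, ← Real.rpow_mul hlam_pos.le]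
    ring_nf
  refine eq_zero_of_forall_abs_mul_pow_le hμ (K := (∑ i, |r i|) * C) fun l => ?_
  have h := abs_dotProduct_le_of_forall_abs_le (r := r) (hbound l)
  rw [Matrix.dotProduct_pow_mulVec_of_vecMul_eq_smul hr, hrpow] at h
  refine le_of_mul_le_mul_right ?_ (pow_pos (one_pos.trans hμ) l)
  have hlam_pow : lam ^ l = √lam ^ l * √lam ^ l := by
    rw [← mul_pow, Real.mul_self_sqrt hlam_pos.le]
  calc |r ⬝ᵥ u| * √lam ^ l * √lam ^ l = |lam ^ l * (r ⬝ᵥ u)| := by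
        rw [abs_mul, abs_of_pos (pow_pos hlam_pos l), hlam_pow]
        ring
    _ ≤ (∑ i, |r i|) * (C * √lam ^ l) := h
    _ = (∑ i, |r i|) * C * √lam ^ l := by ring

theorem stmt5 (n : ℕ) (A : Matrix (Fin n) (Fin n) ℝ) (lam : ℝ) (hlam : 1 < lam)
    (r : Fin n → ℝ) (hr : Matrix.vecMul r A = lam • r)
    (u : Fin n → ℝ) (C : ℝ) (hC : 0 ≤ C)
    (hbound : ∀ (l : ℕ) (i : Fin n),
      |((A ^ l).mulVec u) i| ≤ C * lam ^ ((l : ℝ) / 2)) :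
    dotProduct r u = 0 :=
  stmt5_general n A lam hlam r hr u C hbound
end

section
/- Let G and G' be additive abelian groups, let μ : G →+ ℝ and μ' : G' →+ ℝ be additive homomorphisms, and let h : G ≃+ G' be an order isomorphism, i.e., a group isomorphism such that for every z ∈ G, 0 ≤ μ z if and only if 0 ≤ μ' (h z). If x, y ∈ G satisfy 0 < μ x and 0 < μ y, then μ x * μ' (h y) = μ y * μ' (h x); equivalently, μ(x)/μ(y) = μ'(h x)/μ'(h y). (Lemma 5: an order isomorphism preserves ratios of positive μ-values.) -/
/-!
Both `μ` and `μ' ∘ h` are homomorphisms `G →+ ℝ` with the same nonnegative cone, hence also the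
same positive cone. For a rational `q = m / n` with `n > 0`, the inequality `q < μ x / μ y` says
that `n • x - m • y` lies in the positive cone, so the two ratios have the same rationals below
them and are therefore equal.
-/

namespace AddMonoidHom

variable {G : Type*} [AddCommGroup G] {f g : G →+ ℝ}

theorem pos_iff_pos_of_nonneg_iff (hfg : ∀ z, 0 ≤ f z ↔ 0 ≤ g z) (z : G) :
    0 < f z ↔ 0 < g z := by
  simpa [not_le] using (hfg (-z)).not

theorem rat_lt_div_iff (f : G →+ ℝ) {y : G} (hy : 0 < f y) (x : G) (q : ℚ) :
    (q : ℝ) < f x / f y ↔ 0 < f (q.den • x - q.num • y) := by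
  have hden : (0 : ℝ) < q.den := by positivity
  rw [map_sub, map_nsmul, map_zsmul, nsmul_eq_mul, zsmul_eq_mul, sub_pos, lt_div_iff₀ hy,
    ← div_lt_iff₀' hden, mul_div_right_comm, ← Rat.cast_natCast, ← Rat.cast_intCast,
    ← Rat.cast_div, Rat.num_div_den]

theorem div_eq_div_of_nonneg_iff (hfg : ∀ z, 0 ≤ f z ↔ 0 ≤ g z) {y : G} (hy : 0 < f y)
    (x : G) : f x / f y = g x / g y :=
  eq_of_forall_rat_lt_iff_lt fun q => by
    rw [rat_lt_div_iff f hy, rat_lt_div_iff g ((pos_iff_pos_of_nonneg_iff hfg y).1 hy),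
      pos_iff_pos_of_nonneg_iff hfg]

end AddMonoidHom

theorem stmt7_general {G G' : Type*} [AddCommGroup G] [AddCommGroup G']
    (μ : G →+ ℝ) (μ' : G' →+ ℝ) (h : G ≃+ G')
    (horder : ∀ z : G, 0 ≤ μ z ↔ 0 ≤ μ' (h z))
    (x y : G) (hy : 0 < μ y) :
    μ x * μ' (h y) = μ y * μ' (h x) := by
  let g : G →+ ℝ := μ'.comp h.toAddMonoidHom
  have hgy : 0 < g y := (AddMonoidHom.pos_iff_pos_of_nonneg_iff horder y).1 hy
  have hratio : μ x / μ y = g x / g y := AddMonoidHom.div_eq_div_of_nonneg_iff horder hy x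
  rw [mul_comm (μ y)]
  exact (div_eq_div_iff hy.ne' hgy.ne').1 hratio

theorem stmt7 {G G' : Type*} [AddCommGroup G] [AddCommGroup G']
    (μ : G →+ ℝ) (μ' : G' →+ ℝ) (h : G ≃+ G')
    (horder : ∀ z : G, 0 ≤ μ z ↔ 0 ≤ μ' (h z))
    (x y : G) (hx : 0 < μ x) (hy : 0 < μ y) :
    μ x * μ' (h y) = μ y * μ' (h x) :=
  stmt7_general μ μ' h horder x y hy
end

section
/- Let λ, λ' ∈ ℝ with λ' ≠ 0. Let G and G' be additive abelian groups, μ : G →+ ℝ and μ' : G' →+ ℝ additive homomorphisms, and h : G ≃+ G' an order isomorphism (for every z ∈ G, 0 ≤ μ z if and only if 0 ≤ μ' (h z)). Assume: (a) every value of μ' lies in ℤ[1/λ'] = Algebra.adjoin ℤ ({λ'⁻¹} : Set ℝ); (b) there exists x ∈ G with 0 < μ x; (c) the λ-shift property holds for (G, μ). Then there exist integer polynomials p, q such that Polynomial.aeval λ' q ≠ 0 and λ * (Polynomial.aeval λ' q) = Polynomial.aeval λ' p, i.e., λ = p(λ')/q(λ'). (Equation 16 in the proof of Lemma 6.) -/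
/-!
An order isomorphism `h` makes `μ` and `μ' ∘ h` two homomorphisms `G →+ ℝ` with the same
nonnegative cone. Since `ℚ` is dense in `ℝ`, such homomorphisms are proportional: if the ratios
`μ y / μ x` and `μ' (h y) / μ' (h x)` differed, a rational number `m / n` between them would give
the element `n • y - m • x`, nonnegative for one homomorphism and negative for the other.
Hence the λ-shift relation `λ * μ y = μ x` transfers to `λ * μ' (h y) = μ' (h x)`, so `λ` is a
quotient of two elements of `ℤ[1/λ']`; clearing denominators by powers of `λ'` turns it into a
quotient of integer polynomials evaluated at `λ'`.
-/

open Polynomial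

namespace AddMonoidHom

variable {G K : Type*} [AddCommGroup G] [Field K] [LinearOrder K] [IsStrictOrderedRing K]
  {μ₁ μ₂ : G →+ K}

theorem pos_iff_of_nonneg_iff (hord : ∀ z, 0 ≤ μ₁ z ↔ 0 ≤ μ₂ z) (x : G) :
    0 < μ₁ x ↔ 0 < μ₂ x := by
  have h := hord (-x)
  simp only [map_neg, Left.nonneg_neg_iff] at h
  rw [← not_le, ← not_le, h]

theorem mul_le_mul_of_nonneg_iff [Archimedean K] (hord : ∀ z, 0 ≤ μ₁ z ↔ 0 ≤ μ₂ z) {x : G}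
    (hx : 0 < μ₁ x) (y : G) : μ₁ y * μ₂ x ≤ μ₂ y * μ₁ x := by
  have hx₂ : 0 < μ₂ x := (pos_iff_of_nonneg_iff hord x).mp hx
  by_contra! hlt
  obtain ⟨q, hq₂, hq₁⟩ := exists_rat_btwn ((div_lt_div_iff₀ hx₂ hx).mpr hlt)
  have hden : (0 : K) < q.den := by positivity
  have hq : (q : K) = q.num / q.den := by exact_mod_cast (Rat.num_div_den q).symm
  rw [hq, div_lt_div_iff₀ hx₂ hden] at hq₂
  rw [hq, div_lt_div_iff₀ hden hx] at hq₁
  have hw : 0 ≤ μ₁ ((q.den : ℤ) • y - q.num • x) := by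
    simp only [map_sub, map_zsmul, zsmul_eq_mul]
    push_cast
    linarith
  have hw₂ := (hord _).mp hw
  simp only [map_sub, map_zsmul, zsmul_eq_mul] at hw₂
  push_cast at hw₂
  linarith

theorem mul_eq_mul_of_nonneg_iff [Archimedean K] (hord : ∀ z, 0 ≤ μ₁ z ↔ 0 ≤ μ₂ z) {x : G}
    (hx : 0 < μ₁ x) (y : G) : μ₁ y * μ₂ x = μ₂ y * μ₁ x :=
  le_antisymm (mul_le_mul_of_nonneg_iff hord hx y)
    (mul_le_mul_of_nonneg_iff (fun z ↦ (hord z).symm)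
      ((pos_iff_of_nonneg_iff hord x).mp hx) y)

end AddMonoidHom

section AdjoinInv

variable {K : Type*} [Field K] {t a b c : K}

theorem exists_pow_mul_eq_aeval_of_mem_adjoin_inv (ht : t ≠ 0)
    (ha : a ∈ Algebra.adjoin ℤ ({t⁻¹} : Set K)) : ∃ (p : ℤ[X]) (N : ℕ), t ^ N * a = aeval t p := by
  rw [Algebra.adjoin_singleton_eq_range_aeval] at ha
  obtain ⟨f, rfl⟩ := ha
  let _ : Invertible t⁻¹ := invertibleOfNonzero (inv_ne_zero ht)
  have hreflect := eval₂_reflect_mul_pow (algebraMap ℤ K) t⁻¹ f.natDegree f le_rfl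
  rw [show ⅟t⁻¹ = t from invOf_eq_right_inv (inv_mul_cancel₀ ht)] at hreflect
  refine ⟨f.reflect f.natDegree, f.natDegree, ?_⟩
  rw [AlgHom.toRingHom_eq_coe, RingHom.coe_coe, aeval_def, aeval_def, ← hreflect, inv_pow,
    mul_left_comm, mul_inv_cancel₀ (pow_ne_zero _ ht), mul_one]

theorem exists_mul_aeval_eq_aeval_of_mul_eq (ht : t ≠ 0)
    (ha : a ∈ Algebra.adjoin ℤ ({t⁻¹} : Set K)) (hb : b ∈ Algebra.adjoin ℤ ({t⁻¹} : Set K))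
    (hb₀ : b ≠ 0) (hcb : c * b = a) :
    ∃ p q : ℤ[X], aeval t q ≠ 0 ∧ c * aeval t q = aeval t p := by
  obtain ⟨P, M, hP⟩ := exists_pow_mul_eq_aeval_of_mem_adjoin_inv ht ha
  obtain ⟨Q, N, hQ⟩ := exists_pow_mul_eq_aeval_of_mem_adjoin_inv ht hb
  refine ⟨P * X ^ N, Q * X ^ M, ?_, ?_⟩
  · simp only [map_mul, aeval_X_pow, ← hQ]
    exact mul_ne_zero (mul_ne_zero (pow_ne_zero _ ht) hb₀) (pow_ne_zero _ ht)
  · simp only [map_mul, aeval_X_pow, ← hP, ← hQ, ← hcb]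
    ring

end AdjoinInv

theorem stmt8 (lam lam' : ℝ) (hlam' : lam' ≠ 0)
    {G G' : Type*} [AddCommGroup G] [AddCommGroup G']
    (μ : G →+ ℝ) (μ' : G' →+ ℝ) (h : G ≃+ G')
    (horder : ∀ z : G, 0 ≤ μ z ↔ 0 ≤ μ' (h z))
    (ha : ∀ g' : G', μ' g' ∈ Algebra.adjoin ℤ ({lam'⁻¹} : Set ℝ))
    (hb : ∃ x : G, 0 < μ x)
    (hc : ∀ x : G, ∃ y : G, lam * μ y = μ x) :
    ∃ p q : Polynomial ℤ, Polynomial.aeval lam' q ≠ 0 ∧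
      lam * Polynomial.aeval lam' q = Polynomial.aeval lam' p := by
  obtain ⟨x, hx⟩ := hb
  obtain ⟨y, hy⟩ := hc x
  let ν : G →+ ℝ := μ'.comp h.toAddMonoidHom
  have hνx : 0 < ν x := (AddMonoidHom.pos_iff_of_nonneg_iff horder x).mp hx
  have hprop : μ y * ν x = ν y * μ x := AddMonoidHom.mul_eq_mul_of_nonneg_iff horder hx y
  have hshift : lam * ν y = ν x := by
    refine mul_right_cancel₀ hx.ne' ?_
    rw [mul_assoc, ← hprop, ← mul_assoc, hy, mul_comm]
  have hνy : ν y ≠ 0 := by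
    rintro hzero
    rw [hzero, mul_zero] at hshift
    exact hνx.ne hshift
  exact exists_mul_aeval_eq_aeval_of_mul_eq hlam' (ha (h x)) (ha (h y)) hνy hshift
end

section
/- Let N be an integer with 0 < N and set λ = (N : ℝ); let λ' ∈ ℝ be a positive real algebraic integer (IsIntegral ℤ λ'). Let G and G' be additive abelian groups, μ : G →+ ℝ and μ' : G' →+ ℝ additive homomorphisms, and h : G ≃+ G' an order isomorphism (for every z ∈ G, 0 ≤ μ z if and only if 0 ≤ μ' (h z)). Assume: (a) every value of μ lies in ℤ[1/λ] and every value of μ' lies in ℤ[1/λ']; (b) there exists x ∈ G with 0 < μ x; (c) the λ-shift property holds for (G, μ) and the λ'-shift property holds for (G', μ'); (d) 1 ∈ Set.range μ and 1 ∈ Set.range μ'. Then λ' is an integer (there exists M : ℤ with λ' = (M : ℝ)), and ℤ[1/λ] = ℤ[1/λ'] as subsets of ℝ: Algebra.adjoin ℤ ({λ⁻¹} : Set ℝ) = Algebra.adjoin ℤ ({λ'⁻¹} : Set ℝ). (Lemma 7.) -/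
/-!
Transporting μ' along h gives a second real character ν = μ' ∘ h of G with the same nonnegative
cone as μ, and two such characters are proportional: ν = c • μ. The shift property together with
1 ∈ range identifies range μ with ℤ[1/N] and range μ' with ℤ[1/λ'], so ℤ[1/λ'] = c • ℤ[1/N]; but a
subring that is a scalar multiple of another subring coincides with it. Then 1/λ' ∈ ℤ[1/N] is
rational, and a rational algebraic integer is an integer.
-/

open Pointwise

lemma eq_of_forall_int_le_mul_iff {r s : ℝ}
    (h : ∀ (m : ℤ) (n : ℕ), 0 < n → ((m : ℝ) ≤ n * r ↔ (m : ℝ) ≤ n * s)) : r = s := by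
  have key : ∀ q : ℚ, ((q : ℝ) ≤ r ↔ (q : ℝ) ≤ s) := by
    intro q
    have hden : (0 : ℝ) < q.den := by positivity
    rw [Rat.cast_def, div_le_iff₀ hden, div_le_iff₀ hden, mul_comm r, mul_comm s]
    exact h q.num q.den q.den_pos
  exact le_antisymm (le_of_forall_rat_lt_imp_le fun q hq => (key q).1 hq.le)
    (le_of_forall_rat_lt_imp_le fun q hq => (key q).2 hq.le)

namespace AddMonoidHom

variable {G : Type*} [AddCommGroup G]

theorem eq_div_smul_of_nonneg_iff (μ ν : G →+ ℝ) (hcone : ∀ z, 0 ≤ μ z ↔ 0 ≤ ν z)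
    {x₀ : G} (hx₀ : 0 < μ x₀) : ν = (ν x₀ / μ x₀) • μ := by
  have hνx₀ : 0 < ν x₀ := by
    by_contra! hle
    have := (hcone (-x₀)).2 (by simpa using hle)
    rw [map_neg, neg_nonneg] at this
    linarith
  -- The sign of `n • z - m • x₀` compares `μ z / μ x₀` with the rational `m / n`.
  have hcmp : ∀ z (m : ℤ) (n : ℕ), ((m : ℝ) * μ x₀ ≤ n * μ z ↔ (m : ℝ) * ν x₀ ≤ n * ν z) :=
    fun z m n => by
      simpa only [map_sub, map_nsmul, map_zsmul, nsmul_eq_mul, zsmul_eq_mul, sub_nonneg] using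
        hcone (n • z - m • x₀)
  ext z
  have hratio : μ z / μ x₀ = ν z / ν x₀ := eq_of_forall_int_le_mul_iff fun m n _ => by
    rw [← mul_div_assoc, ← mul_div_assoc, le_div_iff₀ hx₀, le_div_iff₀ hνx₀]
    exact hcmp z m n
  rw [div_eq_div_iff hx₀.ne' hνx₀.ne'] at hratio
  rw [smul_apply, smul_eq_mul]
  field_simp
  linarith

end AddMonoidHom

theorem Subalgebra.eq_of_coe_eq_smul_coe {R A : Type*} [CommSemiring R] [CommSemiring A]
    [Algebra R A] {S T : Subalgebra R A} {c : A} (h : (T : Set A) = c • (S : Set A)) :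
    S = T := by
  have mem_T : ∀ x, x ∈ T ↔ ∃ s ∈ S, c * s = x := fun x => by
    rw [← SetLike.mem_coe, h, Set.mem_smul_set]; rfl
  -- `1 ∈ T` makes `c` invertible with inverse `d ∈ S`, and `c * c ∈ T` then puts `c` itself in `S`.
  obtain ⟨d, hdS, hcd⟩ := (mem_T 1).1 T.one_mem
  have hcT : c ∈ T := (mem_T c).2 ⟨1, S.one_mem, mul_one c⟩
  obtain ⟨e, heS, hce⟩ := (mem_T (c * c)).1 (T.mul_mem hcT hcT)
  have hce' : c = e :=
    calc c = c * c * d := by rw [mul_assoc, hcd, mul_one]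
      _ = e := by rw [← hce, mul_comm c e, mul_assoc, hcd, mul_one]
  ext x
  refine ⟨fun hx => (mem_T x).2 ⟨x * d, S.mul_mem hx hdS, ?_⟩, fun hx => ?_⟩
  · rw [mul_comm x, ← mul_assoc, hcd, one_mul]
  · obtain ⟨s, hs, rfl⟩ := (mem_T x).1 hx
    exact S.mul_mem (hce' ▸ heS) hs

lemma Algebra.adjoin_singleton_algebraMap_le_range (R : Type*) {A B : Type*} [CommSemiring R]
    [CommSemiring A] [Semiring B] [Algebra R A] [Algebra A B] [Algebra R B] [IsScalarTower R A B]
    (a : A) : Algebra.adjoin R {algebraMap A B a} ≤ (IsScalarTower.toAlgHom R A B).range :=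
  Algebra.adjoin_le (by simp)

lemma Rat.exists_int_eq_of_isIntegral_cast {K : Type*} [Field K] [CharZero K] {q : ℚ}
    (h : IsIntegral ℤ (q : K)) : ∃ M : ℤ, (q : K) = M := by
  have hq : IsIntegral ℤ q :=
    (isIntegral_algebraMap_iff (algebraMap ℚ K).injective).1 h
  obtain ⟨M, hM⟩ := IsIntegrallyClosed.isIntegral_iff.1 hq
  exact ⟨M, by rw [← hM]; simp⟩

section Shift

variable {G K : Type*} [AddCommGroup G] [Field K] (μ : G →+ K) {a : K}

lemma ne_zero_of_shift (hshift : ∀ x, ∃ y, a * μ y = μ x) (hone : 1 ∈ Set.range μ) : a ≠ 0 := by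
  rintro rfl
  obtain ⟨x, hx⟩ := hone
  obtain ⟨y, hy⟩ := hshift x
  simp [hx] at hy

lemma inv_pow_mem_range_of_shift (hshift : ∀ x, ∃ y, a * μ y = μ x) (hone : 1 ∈ Set.range μ)
    (k : ℕ) : a⁻¹ ^ k ∈ Set.range μ := by
  induction k with
  | zero => simpa using hone
  | succ k ih =>
    obtain ⟨x, hx⟩ := ih
    obtain ⟨y, hy⟩ := hshift x
    refine ⟨y, ?_⟩
    rw [pow_succ, ← hx, ← hy, mul_comm a, mul_assoc,
      mul_inv_cancel₀ (ne_zero_of_shift μ hshift hone), mul_one]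

lemma range_eq_adjoin_inv_of_shift (hshift : ∀ x, ∃ y, a * μ y = μ x) (hone : 1 ∈ Set.range μ)
    (hvals : ∀ g, μ g ∈ Algebra.adjoin ℤ {a⁻¹}) :
    Set.range μ = Algebra.adjoin ℤ {a⁻¹} := by
  refine subset_antisymm (Set.range_subset_iff.2 hvals) fun x hx => ?_
  rw [SetLike.mem_coe, Algebra.adjoin_singleton_eq_range_aeval] at hx
  obtain ⟨p, rfl⟩ := hx
  rw [← μ.coe_range, AlgHom.toRingHom_eq_coe, RingHom.coe_coe, Polynomial.aeval_eq_sum_range]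
  exact sum_mem fun i _ => zsmul_mem (by simpa using inv_pow_mem_range_of_shift μ hshift hone i) _

end Shift

theorem stmt11_general (N : ℤ) (lam' : ℝ)
    (hint' : IsIntegral ℤ lam')
    {G G' : Type*} [AddCommGroup G] [AddCommGroup G']
    (μ : G →+ ℝ) (μ' : G' →+ ℝ) (h : G ≃+ G')
    (horder : ∀ z : G, 0 ≤ μ z ↔ 0 ≤ μ' (h z))
    (ha : ∀ g : G, μ g ∈ Algebra.adjoin ℤ ({((N : ℝ))⁻¹} : Set ℝ))
    (ha' : ∀ g' : G', μ' g' ∈ Algebra.adjoin ℤ ({lam'⁻¹} : Set ℝ))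
    (hc : ∀ x : G, ∃ y : G, (N : ℝ) * μ y = μ x)
    (hc' : ∀ x' : G', ∃ y' : G', lam' * μ' y' = μ' x')
    (hd : (1 : ℝ) ∈ Set.range μ) (hd' : (1 : ℝ) ∈ Set.range μ') :
    (∃ M : ℤ, lam' = (M : ℝ)) ∧
      Algebra.adjoin ℤ ({((N : ℝ))⁻¹} : Set ℝ) =
        Algebra.adjoin ℤ ({lam'⁻¹} : Set ℝ) := by
  obtain ⟨x₁, hx₁⟩ := hd
  set ν : G →+ ℝ := μ'.comp h.toAddMonoidHom
  have hν : ν = ν x₁ • μ := by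
    simpa [hx₁] using μ.eq_div_smul_of_nonneg_iff ν horder (x₀ := x₁) (by simp [hx₁])
  have hrange : Set.range μ' = ν x₁ • Set.range μ := by
    rw [← Set.range_smul, ← h.surjective.range_comp]
    exact congrArg Set.range (congrArg DFunLike.coe hν)
  have hadjoin : Algebra.adjoin ℤ ({((N : ℝ))⁻¹} : Set ℝ) = Algebra.adjoin ℤ {lam'⁻¹} :=
    Subalgebra.eq_of_coe_eq_smul_coe <| by
      rw [← range_eq_adjoin_inv_of_shift μ hc ⟨x₁, hx₁⟩ ha,
        ← range_eq_adjoin_inv_of_shift μ' hc' hd' ha', hrange]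
  refine ⟨?_, hadjoin⟩
  have hrat : lam'⁻¹ ∈ (IsScalarTower.toAlgHom ℤ ℚ ℝ).range := by
    have hmem : lam'⁻¹ ∈ Algebra.adjoin ℤ ({((N : ℝ))⁻¹} : Set ℝ) :=
      hadjoin ▸ Algebra.self_mem_adjoin_singleton ℤ _
    exact Algebra.adjoin_singleton_algebraMap_le_range ℤ ((N : ℚ)⁻¹) (by simpa using hmem)
  obtain ⟨q, hq⟩ := hrat
  have hlam : lam' = ((q⁻¹ : ℚ) : ℝ) := by
    rw [Rat.cast_inv, ← inv_inv lam']
    exact congrArg Inv.inv hq.symm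
  rw [hlam] at hint' ⊢
  exact Rat.exists_int_eq_of_isIntegral_cast hint'

theorem stmt11 (N : ℤ) (hN : 0 < N) (lam' : ℝ) (hlam' : 0 < lam')
    (hint' : IsIntegral ℤ lam')
    {G G' : Type*} [AddCommGroup G] [AddCommGroup G']
    (μ : G →+ ℝ) (μ' : G' →+ ℝ) (h : G ≃+ G')
    (horder : ∀ z : G, 0 ≤ μ z ↔ 0 ≤ μ' (h z))
    (ha : ∀ g : G, μ g ∈ Algebra.adjoin ℤ ({((N : ℝ))⁻¹} : Set ℝ))
    (ha' : ∀ g' : G', μ' g' ∈ Algebra.adjoin ℤ ({lam'⁻¹} : Set ℝ))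
    (hb : ∃ x : G, 0 < μ x)
    (hc : ∀ x : G, ∃ y : G, (N : ℝ) * μ y = μ x)
    (hc' : ∀ x' : G', ∃ y' : G', lam' * μ' y' = μ' x')
    (hd : (1 : ℝ) ∈ Set.range μ) (hd' : (1 : ℝ) ∈ Set.range μ') :
    (∃ M : ℤ, lam' = (M : ℝ)) ∧
      Algebra.adjoin ℤ ({((N : ℝ))⁻¹} : Set ℝ) =
        Algebra.adjoin ℤ ({lam'⁻¹} : Set ℝ) :=
  stmt11_general N lam' hint' μ μ' h horder ha ha' hc hc' hd hd'
end

section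
/- Let A be an n × n real matrix and let λ ∈ ℝ with λ > 0 be a simple root of the characteristic polynomial of A such that every complex root z of the characteristic polynomial with z ≠ λ satisfies ‖z‖ < λ. Let w : Fin n → ℝ be a nonzero column vector with A *ᵥ w = λ • w, and let r : Fin n → ℝ be a row vector with r ᵥ* A = λ • r and r ⬝ᵥ w ≠ 0. Then for every v : Fin n → ℝ, the sequence l ↦ λ^(-l) • ((A^l) *ᵥ v) converges as l → ∞ to c • w, where c = (r ⬝ᵥ v)/(r ⬝ᵥ w). (The convergence claim in the proof of Lemma 1: since λ exceeds the modulus of all other eigenvalues, ‖λ^{-l}(φ*)^l v − c₀ w₀‖ → 0 with c₀ determined by the left Perron eigenvector.) -/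
/-!
Let `f` be the endomorphism and `φ` the left eigenvector. Write `v = c • w + u` with `φ u = 0`
and factor `charpoly f = (X - μ) * q`. By Cayley–Hamilton, `q(f) u` lies in the `μ`-eigenspace,
which is the line through `w` since `μ` is a simple root; as `φ (q(f) u) = q(μ) • φ u = 0` and
`φ w ≠ 0`, in fact `q(f) u = 0`. Over an algebraically closed field `q = ∏ (X - z)` with
`‖z‖ < ‖μ‖`, and peeling off one factor at a time through `f^(l+1) u = z • f^l u + f^l ((f - z) u)`
gives `‖f^l u‖ / ‖μ‖^l → 0`. A real matrix is handled through its complexification.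
-/

open Polynomial Filter Topology Module Matrix

theorem tendsto_zero_of_le_mul_add {a e : ℕ → ℝ} {c : ℝ} (hc0 : 0 ≤ c) (hc1 : c < 1)
    (ha : ∀ l, 0 ≤ a l) (hrec : ∀ l, a (l + 1) ≤ c * a l + e l)
    (he : Tendsto e atTop (𝓝 0)) : Tendsto a atTop (𝓝 0) := by
  rw [Metric.tendsto_atTop]
  intro δ hδ
  obtain ⟨L, hL⟩ := eventually_atTop.1 <|
    he.eventually (gt_mem_nhds (show 0 < δ / 2 * (1 - c) by nlinarith))
  have hbound : ∀ k, a (L + k) ≤ c ^ k * a L + δ / 2 := by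
    intro k
    induction k with
    | zero => simp only [add_zero, pow_zero, one_mul]; linarith
    | succ k ih =>
      calc a (L + (k + 1)) ≤ c * a (L + k) + e (L + k) := hrec (L + k)
        _ ≤ c * (c ^ k * a L + δ / 2) + δ / 2 * (1 - c) := by
          gcongr
          exact (hL _ (Nat.le_add_right L k)).le
        _ = c ^ (k + 1) * a L + δ / 2 := by ring
  obtain ⟨K, hK⟩ := eventually_atTop.1 <|
    ((tendsto_pow_atTop_nhds_zero_of_lt_one hc0 hc1).mul_const (a L)).eventually
      (gt_mem_nhds (show 0 * a L < δ / 2 by linarith))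
  refine ⟨L + K, fun m hm => ?_⟩
  obtain ⟨k, rfl⟩ := Nat.exists_eq_add_of_le (le_of_add_le_left hm)
  rw [Real.dist_eq, sub_zero, abs_of_nonneg (ha _)]
  linarith [hbound k, hK k (by omega)]

namespace Module.End

theorem comp_aeval_of_comp_eq_smul {R V W : Type*} [CommRing R] [AddCommGroup V] [Module R V]
    [AddCommGroup W] [Module R W] {f : End R V} {φ : V →ₗ[R] W} {μ : R} (hφ : φ ∘ₗ f = μ • φ)
    (p : R[X]) : φ ∘ₗ aeval f p = p.eval μ • φ := by
  induction p using Polynomial.induction_on with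
  | C a => ext; simp [Module.algebraMap_end_apply]
  | add p q hp hq => simp only [map_add, LinearMap.comp_add, hp, hq, eval_add, add_smul]
  | monomial k a ih =>
    rw [pow_succ, ← mul_assoc, map_mul, aeval_X, mul_eq_comp, ← LinearMap.comp_assoc, ih,
      LinearMap.smul_comp, hφ, smul_smul, eval_mul_X]

section Field

variable {K V : Type*} [Field K] [AddCommGroup V] [Module K V] [FiniteDimensional K V]
  {f : End K V} {μ : K}

theorem eigenspace_eq_span_singleton (hμ : f.charpoly.rootMultiplicity μ = 1) {w : V}
    (hw : f w = μ • w) (hw0 : w ≠ 0) : f.eigenspace μ = K ∙ w :=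
  (Submodule.eq_of_le_of_finrank_le
    ((Submodule.span_singleton_le_iff_mem _ _).2 (mem_eigenspace_iff.2 hw))
    (by rw [finrank_span_singleton hw0, ← hμ]; exact f.finrank_eigenspace_le μ)).symm

theorem aeval_apply_eq_zero_of_dual_apply_eq_zero (hμ : f.charpoly.rootMultiplicity μ = 1)
    {q : K[X]} (hq : (X - C μ) * q = f.charpoly) {w : V} (hw : f w = μ • w)
    {φ : Dual K V} (hφ : φ ∘ₗ f = μ • φ) (hφw : φ w ≠ 0) {u : V} (hu : φ u = 0) :
    aeval f q u = 0 := by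
  have hw0 : w ≠ 0 := by rintro rfl; exact hφw (map_zero φ)
  have heigen : aeval f q u ∈ f.eigenspace μ := by
    rw [mem_eigenspace_iff, ← sub_eq_zero]
    have := congr($(LinearMap.aeval_self_charpoly f) u)
    simpa [← hq, Module.algebraMap_end_apply] using this
  obtain ⟨c, hc⟩ := Submodule.mem_span_singleton.1 (eigenspace_eq_span_singleton hμ hw hw0 ▸ heigen)
  have hφq : φ (aeval f q u) = 0 := by
    simpa [hu] using congr($(comp_aeval_of_comp_eq_smul hφ q) u)
  rw [← hc, map_smul, smul_eq_mul, mul_eq_zero] at hφq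
  rw [← hc, hφq.resolve_right hφw, zero_smul]

end Field

theorem tendsto_norm_pow_apply_div_pow {𝕜 V : Type*} [NormedField 𝕜] [SeminormedAddCommGroup V]
    [NormedSpace 𝕜 V] (f : End 𝕜 V) {ρ : ℝ} (s : Multiset 𝕜) (hs : ∀ μ ∈ s, ‖μ‖ < ρ) {z : V}
    (hz : aeval f (s.map fun μ => X - C μ).prod z = 0) :
    Tendsto (fun l => ‖(f ^ l) z‖ / ρ ^ l) atTop (𝓝 0) := by
  induction s using Multiset.induction_on generalizing z with
  | empty =>
    simp only [Multiset.map_zero, Multiset.prod_zero, map_one, one_apply] at hz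
    simp [hz]
  | cons μ t ih =>
    have hμ : ‖μ‖ < ρ := hs μ (Multiset.mem_cons_self μ t)
    have hρ : 0 < ρ := (norm_nonneg μ).trans_lt hμ
    set z₁ := f z - μ • z
    have hz₁ : Tendsto (fun l => ‖(f ^ l) z₁‖ / ρ ^ l) atTop (𝓝 0) := by
      refine ih (fun x hx => hs x (Multiset.mem_cons_of_mem hx)) ?_
      rw [Multiset.map_cons, Multiset.prod_cons, mul_comm, map_mul] at hz
      simpa [z₁, Module.algebraMap_end_apply] using hz
    have hstep : ∀ l, (f ^ (l + 1)) z = μ • (f ^ l) z + (f ^ l) z₁ := fun l => by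
      rw [pow_succ, mul_apply, ← map_smul, ← map_add, add_sub_cancel]
    refine tendsto_zero_of_le_mul_add (c := ‖μ‖ / ρ) (e := fun l => ρ⁻¹ * (‖(f ^ l) z₁‖ / ρ ^ l))
      (by positivity) ((div_lt_one hρ).2 hμ) (fun l => by positivity) (fun l => ?_)
      (by simpa using hz₁.const_mul ρ⁻¹)
    calc ‖(f ^ (l + 1)) z‖ / ρ ^ (l + 1) ≤ (‖μ‖ * ‖(f ^ l) z‖ + ‖(f ^ l) z₁‖) / ρ ^ (l + 1) := by
          rw [hstep, ← norm_smul]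
          gcongr
          exact norm_add_le _ _
      _ = ‖μ‖ / ρ * (‖(f ^ l) z‖ / ρ ^ l) + ρ⁻¹ * (‖(f ^ l) z₁‖ / ρ ^ l) := by
          field_simp
          ring

theorem tendsto_inv_pow_smul_pow_apply {𝕜 V : Type*} [NormedField 𝕜] [IsAlgClosed 𝕜]
    [NormedAddCommGroup V] [NormedSpace 𝕜 V] [FiniteDimensional 𝕜 V] (f : End 𝕜 V) {μ : 𝕜}
    (hμ0 : μ ≠ 0) (hμ : f.charpoly.rootMultiplicity μ = 1)
    (hdom : ∀ z, f.charpoly.IsRoot z → z ≠ μ → ‖z‖ < ‖μ‖) {w : V} (hw : f w = μ • w)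
    {φ : Dual 𝕜 V} (hφ : φ ∘ₗ f = μ • φ) (hφw : φ w ≠ 0) (v : V) :
    Tendsto (fun l : ℕ => (μ ^ l)⁻¹ • (f ^ l) v) atTop (𝓝 ((φ v / φ w) • w)) := by
  set c := φ v / φ w
  set u := v - c • w
  set q := f.charpoly /ₘ (X - C μ)
  have hq : (X - C μ) * q = f.charpoly := by
    simpa [hμ] using pow_mul_divByMonic_rootMultiplicity_eq f.charpoly μ
  have hqμ : ¬ q.IsRoot μ := by
    simpa [hμ] using eval_divByMonic_pow_rootMultiplicity_ne_zero μ f.charpoly_monic.ne_zero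
  have hqu : aeval f q u = 0 := by
    refine aeval_apply_eq_zero_of_dual_apply_eq_zero hμ hq hw hφ hφw ?_
    simp [u, c, div_mul_cancel₀ _ hφw]
  have hq_prod : q = (q.roots.map fun z => X - C z).prod :=
    (IsAlgClosed.splits q).eq_prod_roots_of_monic
      ((monic_X_sub_C μ).of_mul_monic_left (hq ▸ f.charpoly_monic))
  have hdecay : Tendsto (fun l : ℕ => (μ ^ l)⁻¹ • (f ^ l) u) atTop (𝓝 0) := by
    refine tendsto_zero_iff_norm_tendsto_zero.2 ?_
    refine (tendsto_norm_pow_apply_div_pow f q.roots (fun z hz => ?_) (hq_prod ▸ hqu)).congr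
      fun l => by rw [norm_smul, norm_inv, norm_pow, inv_mul_eq_div]
    have hzq : q.IsRoot z := isRoot_of_mem_roots hz
    exact hdom z (by rw [← hq, IsRoot, eval_mul, hzq.eq_zero, mul_zero])
      (by rintro rfl; exact hqμ hzq)
  have hpow_w : ∀ l : ℕ, (f ^ l) w = μ ^ l • w := fun l => by
    simpa using aeval_apply_of_mem_apply_eq_smul (p := X ^ l) hw
  have hv : ∀ l : ℕ, (μ ^ l)⁻¹ • (f ^ l) v = c • w + (μ ^ l)⁻¹ • (f ^ l) u := fun l => by
    rw [show v = c • w + u from (add_sub_cancel _ _).symm, map_add, map_smul, hpow_w, smul_add,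
      smul_comm, inv_smul_smul₀ (pow_ne_zero l hμ0)]
  simpa only [hv, add_zero] using hdecay.const_add (c • w)

end Module.End

theorem Matrix.tendsto_inv_pow_smul_pow_mulVec_s14 {𝕜 ι : Type*} [NormedField 𝕜] [IsAlgClosed 𝕜]
    [Fintype ι] [DecidableEq ι] (M : Matrix ι ι 𝕜) {μ : 𝕜} (hμ0 : μ ≠ 0)
    (hμ : M.charpoly.rootMultiplicity μ = 1) (hdom : ∀ z, M.charpoly.IsRoot z → z ≠ μ → ‖z‖ < ‖μ‖)
    {w : ι → 𝕜} (hw : M *ᵥ w = μ • w) {r : ι → 𝕜} (hr : r ᵥ* M = μ • r) (hrw : r ⬝ᵥ w ≠ 0)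
    (v : ι → 𝕜) :
    Tendsto (fun l : ℕ => (μ ^ l)⁻¹ • (M ^ l) *ᵥ v) atTop (𝓝 ((r ⬝ᵥ v / r ⬝ᵥ w) • w)) := by
  have := Module.End.tendsto_inv_pow_smul_pow_apply (toLin' M) (φ := dotProductEquiv 𝕜 ι r) hμ0
    (by rwa [charpoly_toLin']) (by rwa [charpoly_toLin']) (by rwa [toLin'_apply])
    (LinearMap.ext fun x => by simp [dotProduct_mulVec, hr]) hrw v
  simpa [← toLin'_pow] using this

theorem stmt14_general (n : ℕ) (A : Matrix (Fin n) (Fin n) ℝ) (lam : ℝ) (hlam : 0 < lam)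
    (hsimple : (A.charpoly).rootMultiplicity lam = 1)
    (hdom : ∀ z : ℂ, ((A.map (Complex.ofReal : ℝ → ℂ)).charpoly).IsRoot z →
      z ≠ (lam : ℂ) → ‖z‖ < lam)
    (w : Fin n → ℝ) (hw : A.mulVec w = lam • w)
    (r : Fin n → ℝ) (hr : Matrix.vecMul r A = lam • r)
    (hrw : dotProduct r w ≠ 0) (v : Fin n → ℝ) :
    Filter.Tendsto (fun l : ℕ => (lam ^ l)⁻¹ • ((A ^ l).mulVec v)) Filter.atTop
      (nhds ((dotProduct r v / dotProduct r w) • w)) := by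
  let toℂ : (Fin n → ℝ) → Fin n → ℂ := Pi.map fun _ => Complex.ofReal
  have hmulVec : ∀ (B : Matrix (Fin n) (Fin n) ℝ) (x : Fin n → ℝ),
      B.map Complex.ofRealHom *ᵥ toℂ x = toℂ (B *ᵥ x) :=
    fun B x => funext fun i => (Complex.ofRealHom.map_mulVec B x i).symm
  have hdot : ∀ x y : Fin n → ℝ, toℂ x ⬝ᵥ toℂ y = ((x ⬝ᵥ y : ℝ) : ℂ) :=
    fun x y => (Complex.ofRealHom.map_dotProduct x y).symm
  have hvecMul : toℂ r ᵥ* A.map Complex.ofRealHom = toℂ (r ᵥ* A) :=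
    funext fun i => (Complex.ofRealHom.map_vecMul A r i).symm
  have hsimpleℂ : (A.map Complex.ofRealHom).charpoly.rootMultiplicity (lam : ℂ) = 1 := by
    rw [charpoly_map, ← hsimple]
    exact (eq_rootMultiplicity_map Complex.ofReal_injective lam).symm
  have hlim := (A.map Complex.ofRealHom).tendsto_inv_pow_smul_pow_mulVec_s14 (μ := lam)
    (by exact_mod_cast hlam.ne') hsimpleℂ
    (by rwa [Complex.norm_of_nonneg hlam.le]) (by rw [hmulVec, hw]; ext; simp [toℂ])
    (by rw [hvecMul, hr]; ext; simp [toℂ]) (by rwa [hdot, Complex.ofReal_ne_zero]) (toℂ v)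
  rw [(Topology.IsEmbedding.piMap fun _ => Complex.isometry_ofReal.isEmbedding).tendsto_nhds_iff]
  convert hlim using 2 with l
  · rw [← Matrix.map_pow, hmulVec]; ext; simp [toℂ]
  · rw [hdot, hdot]; ext; simp [toℂ]

theorem stmt14 (n : ℕ) (A : Matrix (Fin n) (Fin n) ℝ) (lam : ℝ) (hlam : 0 < lam)
    (hsimple : (A.charpoly).rootMultiplicity lam = 1)
    (hdom : ∀ z : ℂ, ((A.map (Complex.ofReal : ℝ → ℂ)).charpoly).IsRoot z →
      z ≠ (lam : ℂ) → ‖z‖ < lam)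
    (w : Fin n → ℝ) (hw0 : w ≠ 0) (hw : A.mulVec w = lam • w)
    (r : Fin n → ℝ) (hr : Matrix.vecMul r A = lam • r)
    (hrw : dotProduct r w ≠ 0) (v : Fin n → ℝ) :
    Filter.Tendsto (fun l : ℕ => (lam ^ l)⁻¹ • ((A ^ l).mulVec v)) Filter.atTop
      (nhds ((dotProduct r v / dotProduct r w) • w)) :=
  stmt14_general n A lam hlam hsimple hdom w hw r hr hrw v
end
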